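/- Under the hypotheses of the finite-sample calibrated length oracle inequality, let C*(x) denote any shortest interval in I_{1−α}(x) := {[a,b] : a ≤ b, P(a ≤ Y ≤ b | X = x) ≥ 1−α}, and define the truncation cost R_ε := E_X L*_ε(X) − E_X |C*(X)| ≥ 0. Then with the same probability at least 1−η over the calibration sample, E_X |Ĉ(X)| ≤ E_X |C*(X)| + R_ε + M̄Δ + 4e + (δ_m(η) + 2/m)/c. Moreover, if for every x the oracle allocation set argmin_{τ∈[0,α]} L_τ(x) is contained in [ε, α−ε], then R_ε = 0. -/

import Mathlib

open MeasureTheory Set Filter ProbabilityTheory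
open scoped ENNReal

noncomputable section

/-- The `k`-th smallest value among `v 0, …, v (m-1)` (for `1 ≤ k ≤ m`), characterized
as the infimum of the thresholds below which at least `k` of the values lie. -/
def kthSmallest (m : ℕ) (v : Fin m → ℝ) (k : ℕ) : ℝ :=
  sInf {t : ℝ | k ≤ (Finset.univ.filter fun i => v i ≤ t).card}

variable {𝒳 : Type*} [MeasurableSpace 𝒳]

/-- Conditional `τ`-th quantile of `Y` given `X = x`, for the conditional law `κ x`. -/
def cq (κ : Kernel 𝒳 ℝ) (τ : ℝ) (x : 𝒳) : ℝ :=
  sInf {y : ℝ | τ ≤ ((κ x) (Iic y)).toReal}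

/-- Conditional core length `L_τ(x) = q_{1-α+τ}(x) - q_τ(x)`. -/
def cL (κ : Kernel 𝒳 ℝ) (α τ : ℝ) (x : 𝒳) : ℝ :=
  cq κ (1 - α + τ) x - cq κ τ x

/-- Truncated conditional oracle length `L*_ε(x) = min_{τ ∈ [ε,α-ε]} L_τ(x)`. -/
def cLstar (κ : Kernel 𝒳 ℝ) (α ε : ℝ) (x : 𝒳) : ℝ :=
  sInf ((fun τ => cL κ α τ x) '' Icc ε (α - ε))

/-- Estimated allocation: the least minimizer over the grid `G` of the fitted core
length `q̂_{1-α+τ}(x) - q̂_τ(x)`. -/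
def tauhat (α : ℝ) (G : Finset ℝ) (qhat : ℝ → 𝒳 → ℝ) (x : 𝒳) : ℝ :=
  sInf {τ : ℝ | τ ∈ G ∧ ∀ σ ∈ G,
    qhat (1 - α + τ) x - qhat τ x ≤ qhat (1 - α + σ) x - qhat σ x}

/-- TA-CQR conformity score at `(x,y)`: `max{q̂_{τ̂(x)}(x) - y, y - q̂_{1-α+τ̂(x)}(x), 0}`. -/
def taScore (α : ℝ) (G : Finset ℝ) (qhat : ℝ → 𝒳 → ℝ) (p : 𝒳 × ℝ) : ℝ :=
  max (max (qhat (tauhat α G qhat p.1) p.1 - p.2)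
           (p.2 - qhat (1 - α + tauhat α G qhat p.1) p.1)) 0

/-- Topological support of a Borel measure on ℝ. -/
def msupp (μ : Measure ℝ) : Set ℝ := {y | ∀ U ∈ nhds y, 0 < μ U}

/-- Extended-real conditional quantile, with the support endpoints at levels `≤ 0`
and `≥ 1`. -/
def cqE (κ : Kernel 𝒳 ℝ) (τ : ℝ) (x : 𝒳) : EReal :=
  if τ ≤ 0 then sInf (Real.toEReal '' msupp (κ x))
  else if 1 ≤ τ then sSup (Real.toEReal '' msupp (κ x))
  else ((cq κ τ x : ℝ) : EReal)

/-- Extended-real conditional core length. -/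
def cLE (κ : Kernel 𝒳 ℝ) (α τ : ℝ) (x : 𝒳) : EReal :=
  cqE κ (1 - α + τ) x - cqE κ τ x


section HReal
open Real

lemma bern_D_pos (p l : ℝ) (hp0 : 0 ≤ p) (hp1 : p ≤ 1) :
    0 < 1 - p + p * exp l := by
  rcases eq_or_lt_of_le hp1 with h | h
  · subst h; simpa using exp_pos l
  · nlinarith [exp_pos l, mul_nonneg hp0 (exp_pos l).le]

lemma bern_mgf_bound (p : ℝ) (hp0 : 0 ≤ p) (hp1 : p ≤ 1) (l : ℝ) (hl : l ≤ 0) :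
    1 + p * (exp l - 1) ≤ exp (l * p + l ^ 2 / 8) := by
  set D : ℝ → ℝ := fun u => 1 - p + p * exp u with hD
  have hDpos : ∀ u, 0 < D u := fun u => bern_D_pos p u hp0 hp1
  -- g' u := p * exp u / D u - p - u / 4
  set g' : ℝ → ℝ := fun u => p * exp u / D u - p - u / 4 with hg'
  set g : ℝ → ℝ := fun u => Real.log (D u) - u * p - u ^ 2 / 8 with hg
  have hDderiv : ∀ u, HasDerivAt D (p * exp u) u := by
    intro u
    exact ((Real.hasDerivAt_exp u).const_mul p).const_add (1 - p)
  have hgderiv : ∀ u, HasDerivAt g (g' u) u := by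
    intro u
    have h1 : HasDerivAt (fun u => Real.log (D u)) (p * exp u / D u) u :=
      (hDderiv u).log (hDpos u).ne'
    have h2 : HasDerivAt (fun u : ℝ => u * p) p u := by
      simpa using (hasDerivAt_id u).mul_const p
    have h3 : HasDerivAt (fun u : ℝ => u ^ 2 / 8) (u / 4) u := by
      have := (hasDerivAt_pow 2 u).div_const 8
      exact this.congr_deriv (by rw [show (2:ℕ) - 1 = 1 from rfl]; push_cast; ring)
    exact (h1.sub h2).sub h3
  have hg'deriv : ∀ u, HasDerivAt g' (p * exp u * (1 - p) / (D u) ^ 2 - 1 / 4) u := by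
    intro u
    have h1 : HasDerivAt (fun u => p * exp u / D u)
        ((p * exp u * D u - p * exp u * (p * exp u)) / (D u) ^ 2) u :=
      ((Real.hasDerivAt_exp u).const_mul p).div (hDderiv u) (hDpos u).ne'
    have h2 : HasDerivAt (fun u : ℝ => p + u / 4) (1 / 4) u := by
      simpa using ((hasDerivAt_id u).div_const 4).const_add p
    have h3 := h1.sub h2
    have he : (p * exp u * D u - p * exp u * (p * exp u)) / (D u) ^ 2
        = p * exp u * (1 - p) / (D u) ^ 2 := by
      congr 1; simp only [hD]; ring
    rw [he] at h3
    have hfe : g' = fun u => p * exp u / D u - (p + u / 4) := by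
      funext v; simp only [hg']; ring
    rw [hfe]; exact h3
  -- g' is antitone
  have hg'anti : Antitone g' := by
    apply antitone_of_deriv_nonpos
    · exact fun u => (hg'deriv u).differentiableAt
    · intro u
      rw [(hg'deriv u).deriv]
      have hD2 : (0:ℝ) < (D u) ^ 2 := pow_pos (hDpos u) 2
      rw [sub_nonpos, div_le_div_iff₀ hD2 (by norm_num : (0:ℝ) < 4)]
      have hDu : D u = 1 - p + p * exp u := rfl
      rw [hDu]
      nlinarith [sq_nonneg (p * exp u - (1 - p))]
  have hg'0 : g' 0 = 0 := by simp [hg', hD]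
  -- for u ≤ 0, g' u ≥ 0, so g is monotone on Iic 0
  have hgmono : MonotoneOn g (Iic 0) := by
    apply monotoneOn_of_deriv_nonneg (convex_Iic 0)
    · exact (Differentiable.continuous (fun u => (hgderiv u).differentiableAt)).continuousOn
    · intro u hu; exact (hgderiv u).differentiableAt.differentiableWithinAt
    · intro u hu
      rw [(hgderiv u).deriv]
      rw [interior_Iic] at hu
      have := hg'anti (le_of_lt hu)
      rw [hg'0] at this; exact this
  have hg0 : g 0 = 0 := by simp [hg, hD]
  have hgle : g l ≤ 0 := by
    rcases eq_or_lt_of_le hl with h | h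
    · rw [h, hg0]
    · calc g l ≤ g 0 := hgmono (mem_Iic.mpr (le_of_lt h)) (mem_Iic.mpr (le_refl 0)) hl
      _ = 0 := hg0
  have hkey : Real.log (D l) ≤ l * p + l ^ 2 / 8 := by
    have := hgle; simp only [hg] at this; linarith
  have hDl : D l = 1 + p * (exp l - 1) := by simp [hD]; ring
  calc 1 + p * (exp l - 1) = D l := hDl.symm
    _ = exp (Real.log (D l)) := (exp_log (hDpos l)).symm
    _ ≤ exp (l * p + l ^ 2 / 8) := exp_le_exp.mpr hkey

lemma binom_tail {Ω : Type*} [MeasurableSpace Ω] (P : Measure Ω) [IsProbabilityMeasure P]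
    (m : ℕ) (hm : 0 < m) (A : Fin m → Set Ω) (hA : ∀ i, MeasurableSet (A i))
    (hind : iIndepFun
      (fun i => (A i).indicator (fun _ => (1:ℝ))) P)
    (pbar : ℝ) (hp0 : 0 ≤ pbar) (hpA : ∀ i, ENNReal.ofReal pbar ≤ P (A i))
    (δ : ℝ) (hδ : 0 ≤ δ) (a : ℝ) (ha : a ≤ m * pbar - (m * δ + 1)) :
    (P {ω | (∑ i, (A i).indicator (fun _ => (1:ℝ))) ω ≤ a}).toReal
      ≤ Real.exp (-(2 * m * δ ^ 2)) := by
  classical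
  have : Nonempty (Fin m) := ⟨⟨0, hm⟩⟩
  set B : Fin m → Ω → ℝ := fun i => (A i).indicator (fun _ => (1:ℝ)) with hB
  have hp1 : pbar ≤ 1 := by
    have h := le_trans (hpA (Classical.arbitrary (Fin m))) prob_le_one
    exact_mod_cast ENNReal.ofReal_le_one.mp h
  have hBmeas : ∀ i, Measurable (B i) := fun i => measurable_const.indicator (hA i)
  set l : ℝ := -(4 * δ) with hl
  have hl0 : l ≤ 0 := by simp [hl]; positivity
  have hexp_eq : ∀ i, (fun ω => exp (l * B i ω))
      = fun ω => 1 + (A i).indicator (fun _ => exp l - 1) ω := by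
    intro i; funext ω
    by_cases h : ω ∈ A i
    · simp [hB, Set.indicator_of_mem h]
    · simp [hB, Set.indicator_of_mem, Set.indicator_of_notMem h]
  have hint : ∀ i, Integrable (fun ω => exp (l * B i ω)) P := by
    intro i; rw [hexp_eq i]
    exact (integrable_const 1).add ((integrable_const _).indicator (hA i))
  have hmgf : ∀ i, mgf (B i) P l = 1 + (exp l - 1) * (P (A i)).toReal := by
    intro i
    rw [mgf, hexp_eq i, integral_add (integrable_const 1)
      ((integrable_const _).indicator (hA i))]
    rw [integral_const, integral_indicator_const _ (hA i)]
    simp [mul_comm]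
    exact Or.inl rfl
  have hmgf_le : ∀ i, mgf (B i) P l ≤ exp (l * pbar + l ^ 2 / 8) := by
    intro i
    rw [hmgf i]
    have hpi : pbar ≤ (P (A i)).toReal :=
      (ENNReal.ofReal_le_iff_le_toReal (measure_ne_top P _)).mp (hpA i)
    have hexm : exp l - 1 ≤ 0 := by
      have := exp_le_one_iff.mpr hl0; linarith
    calc 1 + (exp l - 1) * (P (A i)).toReal ≤ 1 + (exp l - 1) * pbar := by nlinarith
    _ = 1 + pbar * (exp l - 1) := by ring
    _ ≤ exp (l * pbar + l ^ 2 / 8) := bern_mgf_bound pbar hp0 hp1 l hl0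
  have hintS : Integrable (fun ω => exp (l * (∑ i, B i) ω)) P :=
    hind.integrable_exp_mul_sum hBmeas (fun i _ => hint i)
  have hchern := measure_le_le_exp_mul_mgf (X := ∑ i, B i) (μ := P) (t := l) a hl0 hintS
  have hmgfS : mgf (∑ i, B i) P l = ∏ i, mgf (B i) P l := hind.mgf_sum hBmeas Finset.univ
  have hprod : ∏ i, mgf (B i) P l ≤ exp (m * (l * pbar + l ^ 2 / 8)) := by
    calc ∏ i, mgf (B i) P l ≤ ∏ _i : Fin m, exp (l * pbar + l ^ 2 / 8) :=
        Finset.prod_le_prod (fun i _ => mgf_nonneg) (fun i _ => hmgf_le i)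
    _ = exp (l * pbar + l ^ 2 / 8) ^ m := by
        rw [Finset.prod_const, Finset.card_univ, Fintype.card_fin]
    _ = exp (m * (l * pbar + l ^ 2 / 8)) := by
        rw [← Real.exp_nat_mul]
  calc (P {ω | (∑ i, B i) ω ≤ a}).toReal ≤ exp (-l * a) * mgf (∑ i, B i) P l := hchern
  _ ≤ exp (-l * a) * exp (m * (l * pbar + l ^ 2 / 8)) := by
      rw [hmgfS]
      exact mul_le_mul_of_nonneg_left hprod (exp_pos _).le
  _ = exp (-l * a + m * (l * pbar + l ^ 2 / 8)) := (Real.exp_add _ _).symm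
  _ ≤ exp (-(2 * m * δ ^ 2)) := by
      apply Real.exp_le_exp.mpr
      have h4 : 4 * δ * a ≤ 4 * δ * (m * pbar - (m * δ + 1)) :=
        mul_le_mul_of_nonneg_left ha (by positivity)
      have hm1 : (1:ℝ) ≤ m := by exact_mod_cast hm
      nlinarith [hδ]

end HReal

lemma kthSmallest_le {m k : ℕ} (v : Fin m → ℝ) (hk1 : 1 ≤ k) (r : ℝ)
    (h : k ≤ (Finset.univ.filter fun i => v i ≤ r).card) : kthSmallest m v k ≤ r := by
  have hne : (Finset.univ.filter fun i => v i ≤ r).Nonempty := by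
    rw [← Finset.card_pos]; omega
  obtain ⟨i₀, hi₀⟩ := hne
  have : Nonempty (Fin m) := ⟨i₀⟩
  refine csInf_le ⟨Finset.univ.inf' Finset.univ_nonempty v, ?_⟩ h
  rintro t ht
  simp only [mem_setOf_eq] at ht
  have hne' : (Finset.univ.filter fun i => v i ≤ t).Nonempty := by
    rw [← Finset.card_pos]; omega
  obtain ⟨j, hj⟩ := hne'
  simp only [Finset.mem_filter] at hj
  exact le_trans (Finset.inf'_le v (Finset.mem_univ j)) hj.2

lemma kthSmallest_nonneg {m k : ℕ} (v : Fin m → ℝ) (hv : ∀ i, 0 ≤ v i)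
    (hk1 : 1 ≤ k) (hkm : k ≤ m) : 0 ≤ kthSmallest m v k := by
  have hm : 0 < m := lt_of_lt_of_le hk1 hkm
  have : Nonempty (Fin m) := ⟨⟨0, hm⟩⟩
  refine le_csInf ⟨Finset.univ.sup' Finset.univ_nonempty v, ?_⟩ ?_
  · simp only [mem_setOf_eq]
    have : (Finset.univ.filter fun i => v i ≤ Finset.univ.sup' Finset.univ_nonempty v)
        = Finset.univ := by
      apply Finset.filter_true_of_mem
      intro i _; exact Finset.le_sup' v (Finset.mem_univ i)
    rw [this, Finset.card_univ, Fintype.card_fin]; exact hkm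
  · rintro t ht
    simp only [mem_setOf_eq] at ht
    have hne' : (Finset.univ.filter fun i => v i ≤ t).Nonempty := by
      rw [← Finset.card_pos]; omega
    obtain ⟨j, hj⟩ := hne'
    simp only [Finset.mem_filter] at hj
    exact le_trans (hv j) hj.2


section HTop
open Topology
namespace QPack

noncomputable def Fm (μ : Measure ℝ) (y : ℝ) : ℝ := (μ (Iic y)).toReal

noncomputable def Qm (μ : Measure ℝ) (τ : ℝ) : ℝ := sInf {y : ℝ | τ ≤ Fm μ y}

variable {μ : Measure ℝ} [IsProbabilityMeasure μ]

lemma Fm_mono : Monotone (Fm μ) := fun a b hab =>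
  ENNReal.toReal_mono (measure_ne_top μ _) (measure_mono (Iic_subset_Iic.mpr hab))

lemma mem_S_iff {τ y : ℝ} : τ ≤ Fm μ y ↔ ENNReal.ofReal τ ≤ μ (Iic y) :=
  (ENNReal.ofReal_le_iff_le_toReal (measure_ne_top μ _)).symm

lemma S_nonempty {τ : ℝ} (hτ : τ < 1) : ∃ y, τ ≤ Fm μ y := by
  have h1 : ENNReal.ofReal τ < 1 := by
    rcases le_or_gt τ 0 with h | h
    · calc ENNReal.ofReal τ = 0 := by simp [ENNReal.ofReal_eq_zero.mpr h]
      _ < 1 := by norm_num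
    · rwa [← ENNReal.ofReal_one, ENNReal.ofReal_lt_ofReal_iff (by norm_num)]
  have ht := tendsto_measure_Iic_atTop (μ := μ)
  rw [measure_univ] at ht
  have := ht.eventually (eventually_ge_nhds h1)
  obtain ⟨y, hy⟩ := this.exists
  exact ⟨y, mem_S_iff.mpr hy⟩

lemma S_bddBelow {τ : ℝ} (hτ : 0 < τ) : BddBelow {y : ℝ | τ ≤ Fm μ y} := by
  have hI : (⋂ y : ℝ, Iic y) = (∅ : Set ℝ) := by
    ext z; simp only [mem_iInter, mem_Iic, mem_empty_iff_false, iff_false, not_forall]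
    exact ⟨z - 1, by push_neg; linarith⟩
  have ht : Tendsto (μ ∘ Iic) atBot (𝓝 0) := by
    have := tendsto_measure_iInter_atBot (μ := μ) (s := Iic)
      (fun y => measurableSet_Iic.nullMeasurableSet) monotone_Iic ⟨0, measure_ne_top μ _⟩
    rwa [hI, measure_empty] at this
  have h0 : (0 : ENNReal) < ENNReal.ofReal τ := ENNReal.ofReal_pos.mpr hτ
  obtain ⟨y₀, hy₀⟩ := eventually_atBot.mp (ht.eventually (eventually_lt_nhds h0))
  refine ⟨y₀, fun z hz => ?_⟩
  by_contra hlt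
  push_neg at hlt
  have h1 : μ (Iic z) < ENNReal.ofReal τ := hy₀ z (le_of_lt hlt)
  have h2 : ENNReal.ofReal τ ≤ μ (Iic z) := mem_S_iff.mp hz
  exact absurd h2 (not_le.mpr h1)

lemma Qm_le {τ y : ℝ} (hτ : 0 < τ) (h : τ ≤ Fm μ y) : Qm μ τ ≤ y :=
  csInf_le (S_bddBelow hτ) h

lemma Fm_lt_of_lt_Qm {τ y : ℝ} (hτ : 0 < τ) (h : y < Qm μ τ) : Fm μ y < τ := by
  by_contra hc
  push_neg at hc
  exact absurd (Qm_le hτ hc) (not_le.mpr h)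

lemma Fm_Qm_ge {τ : ℝ} (h0 : 0 < τ) (h1 : τ < 1) : τ ≤ Fm μ (Qm μ τ) := by
  set q := Qm μ τ with hq
  have hSne : {y : ℝ | τ ≤ Fm μ y}.Nonempty := S_nonempty h1
  have hstep : ∀ n : ℕ, ENNReal.ofReal τ ≤ μ (Iic (q + 1 / (n + 1))) := by
    intro n
    have hpos : (0 : ℝ) < 1 / (n + 1) := by positivity
    have : q < q + 1 / (n + 1) := by linarith
    obtain ⟨y, hy, hylt⟩ := (csInf_lt_iff (S_bddBelow h0) hSne).mp (hq ▸ this)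
    exact mem_S_iff.mp (le_trans hy (Fm_mono (le_of_lt hylt)))
  have hInter : (⋂ n : ℕ, Iic (q + 1 / (n + 1))) = Iic q := by
    ext z
    simp only [mem_iInter, mem_Iic]
    constructor
    · intro h
      refine le_of_forall_pos_le_add fun ε hε => ?_
      obtain ⟨n, hn⟩ := exists_nat_one_div_lt hε
      calc z ≤ q + 1 / (n + 1) := h n
      _ ≤ q + ε := by linarith [hn]
    · intro h n
      have : (0:ℝ) < 1 / (n+1) := by positivity
      linarith
  have hanti : Antitone fun n : ℕ => Iic (q + 1 / ((n:ℝ) + 1)) := by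
    intro a b hab
    apply Iic_subset_Iic.mpr
    have : (1:ℝ) / (b + 1) ≤ 1 / (a + 1) := by
      apply one_div_le_one_div_of_le (by positivity)
      exact_mod_cast by omega
    linarith
  have ht := tendsto_measure_iInter_atTop (μ := μ)
    (fun n : ℕ => measurableSet_Iic.nullMeasurableSet) hanti ⟨0, measure_ne_top μ _⟩
  rw [hInter] at ht
  have := ge_of_tendsto' ht hstep
  exact mem_S_iff.mpr this

lemma measure_Iio_Qm_le {τ : ℝ} (h0 : 0 < τ) : μ (Iio (Qm μ τ)) ≤ ENNReal.ofReal τ := by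
  set q := Qm μ τ with hq
  have hUnion : (⋃ n : ℕ, Iic (q - 1 / (n + 1))) = Iio q := by
    ext z
    simp only [mem_iUnion, mem_Iic, mem_Iio]
    constructor
    · rintro ⟨n, hn⟩
      have : (0:ℝ) < 1 / (n+1) := by positivity
      linarith
    · intro h
      obtain ⟨n, hn⟩ := exists_nat_one_div_lt (sub_pos.mpr h)
      exact ⟨n, by linarith⟩
  have hmon : Monotone fun n : ℕ => Iic (q - 1 / ((n:ℝ) + 1)) := by
    intro a b hab
    apply Iic_subset_Iic.mpr
    have : (1:ℝ) / (b + 1) ≤ 1 / (a + 1) := by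
      apply one_div_le_one_div_of_le (by positivity)
      exact_mod_cast by omega
    linarith
  have ht := tendsto_measure_iUnion_atTop (μ := μ) hmon
  rw [hUnion] at ht
  refine le_of_tendsto' ht fun n => ?_
  have hlt : Fm μ (q - 1 / ((n:ℝ) + 1)) < τ := by
    apply Fm_lt_of_lt_Qm h0
    have : (0:ℝ) < 1 / ((n:ℝ)+1) := by positivity
    rw [← hq]; linarith
  calc μ (Iic (q - 1 / ((n:ℝ) + 1)))
      = ENNReal.ofReal (Fm μ (q - 1 / ((n:ℝ) + 1))) :=
        (ENNReal.ofReal_toReal (measure_ne_top μ _)).symm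
    _ ≤ ENNReal.ofReal τ := ENNReal.ofReal_le_ofReal (le_of_lt hlt)

lemma Fm_Qm_le (hat : ∀ y : ℝ, μ {y} = 0) {τ : ℝ} (h0 : 0 < τ) : Fm μ (Qm μ τ) ≤ τ := by
  have heq : μ (Iic (Qm μ τ)) = μ (Iio (Qm μ τ)) :=
    (measure_congr (Iio_ae_eq_Iic' (hat (Qm μ τ)))).symm
  rw [Fm, heq]
  have := measure_Iio_Qm_le (μ := μ) h0
  calc (μ (Iio (Qm μ τ))).toReal ≤ (ENNReal.ofReal τ).toReal :=
        ENNReal.toReal_mono ENNReal.ofReal_ne_top this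
  _ ≤ τ := by rw [ENNReal.toReal_ofReal (le_of_lt h0)]

lemma Qm_mono {τ τ' : ℝ} (h0 : 0 < τ) (hle : τ ≤ τ') (h1 : τ' < 1) : Qm μ τ ≤ Qm μ τ' := by
  apply csInf_le_csInf (S_bddBelow h0) (S_nonempty h1)
  intro y hy
  exact le_trans hle hy

lemma measure_Icc_Qm {τ τ' : ℝ} (h0 : 0 < τ) (hle : τ ≤ τ') (h1 : τ' < 1) :
    ENNReal.ofReal (τ' - τ) ≤ μ (Icc (Qm μ τ) (Qm μ τ')) := by
  have hqq := Qm_mono (μ := μ) h0 hle h1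
  have hsub : Iic (Qm μ τ') ⊆ Iio (Qm μ τ) ∪ Icc (Qm μ τ) (Qm μ τ') := by
    intro z hz
    rcases lt_or_ge z (Qm μ τ) with h | h
    · exact Or.inl h
    · exact Or.inr ⟨h, hz⟩
  have h1' : ENNReal.ofReal τ' ≤ μ (Iic (Qm μ τ')) :=
    mem_S_iff.mp (Fm_Qm_ge (lt_of_lt_of_le h0 hle) h1)
  have h2 : μ (Iic (Qm μ τ')) ≤ ENNReal.ofReal τ + μ (Icc (Qm μ τ) (Qm μ τ')) :=
    le_trans (measure_mono hsub)
      (le_trans (measure_union_le _ _) (add_le_add_left (measure_Iio_Qm_le h0) _))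
  rw [ENNReal.ofReal_sub _ (le_of_lt h0)]
  rw [tsub_le_iff_right]
  calc ENNReal.ofReal τ' ≤ ENNReal.ofReal τ + μ (Icc (Qm μ τ) (Qm μ τ')) :=
      le_trans h1' h2
  _ = μ (Icc (Qm μ τ) (Qm μ τ')) + ENNReal.ofReal τ := by ring

lemma measure_Icc_Qm_toReal {τ τ' : ℝ} (h0 : 0 < τ) (hle : τ ≤ τ') (h1 : τ' < 1) :
    τ' - τ ≤ (μ (Icc (Qm μ τ) (Qm μ τ'))).toReal :=
  (ENNReal.ofReal_le_iff_le_toReal (measure_ne_top μ _)).mp (measure_Icc_Qm h0 hle h1)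

lemma measure_Ioo_ge_of_density {f : ℝ → ℝ}
    (hμ : μ = MeasureTheory.volume.withDensity fun y => ENNReal.ofReal (f y))
    {c u v : ℝ} (huv : u ≤ v) (hc : ∀ y ∈ Icc u v, c ≤ f y) :
    ENNReal.ofReal (c * (v - u)) ≤ μ (Ioo u v) := by
  rcases le_or_gt c 0 with h | h
  · have : c * (v - u) ≤ 0 := mul_nonpos_of_nonpos_of_nonneg h (by linarith)
    simp [ENNReal.ofReal_eq_zero.mpr this]
  · rw [hμ, withDensity_apply _ measurableSet_Ioo]
    have hb : ∀ᵐ y ∂(MeasureTheory.volume.restrict (Ioo u v)),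
        ENNReal.ofReal c ≤ ENNReal.ofReal (f y) := by
      refine ae_restrict_of_forall_mem measurableSet_Ioo fun y hy => ?_
      exact ENNReal.ofReal_le_ofReal (hc y ⟨le_of_lt hy.1, le_of_lt hy.2⟩)
    calc ENNReal.ofReal (c * (v - u)) = ENNReal.ofReal c * ENNReal.ofReal (v - u) :=
        ENNReal.ofReal_mul (le_of_lt h)
    _ = ∫⁻ _ in Ioo u v, ENNReal.ofReal c := by
        rw [setLIntegral_const, Real.volume_Ioo]
    _ ≤ ∫⁻ y in Ioo u v, ENNReal.ofReal (f y) := lintegral_mono_ae hb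


lemma coverage {f : ℝ → ℝ}
    (hμ : μ = MeasureTheory.volume.withDensity fun y => ENNReal.ofReal (f y))
    {τ τ' c s : ℝ} (h0 : 0 < τ) (hle : τ ≤ τ') (h1 : τ' < 1) (hs : 0 ≤ s)
    (hcl : ∀ y ∈ Icc (Qm μ τ - s) (Qm μ τ), c ≤ f y)
    (hcu : ∀ y ∈ Icc (Qm μ τ') (Qm μ τ' + s), c ≤ f y) :
    ENNReal.ofReal (τ' - τ + 2 * (c * s)) ≤ μ (Icc (Qm μ τ - s) (Qm μ τ' + s)) := by
  set qa := Qm μ τ with hqa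
  set qb := Qm μ τ' with hqb
  have hqq : qa ≤ qb := Qm_mono h0 hle h1
  set A := Ioo (qa - s) qa with hA
  set B := Icc qa qb with hB
  set C := Ioo qb (qb + s) with hC
  have hsub : A ∪ (B ∪ C) ⊆ Icc (qa - s) (qb + s) := by
    rintro z (hz | hz | hz)
    · exact ⟨le_of_lt hz.1, by rcases hz with ⟨_, h2⟩; linarith⟩
    · exact ⟨by rcases hz with ⟨h1', _⟩; linarith, by rcases hz with ⟨_, h2⟩; linarith⟩
    · exact ⟨by rcases hz with ⟨h1', _⟩; linarith, le_of_lt hz.2⟩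
  have hd1 : Disjoint A (B ∪ C) := by
    rw [Set.disjoint_left]
    rintro z hz (hz' | hz')
    · exact absurd hz'.1 (not_le.mpr hz.2)
    · exact absurd hz'.1 (not_lt.mpr (le_trans (le_of_lt hz.2) hqq))
  have hd2 : Disjoint B C := by
    rw [Set.disjoint_left]
    rintro z hz hz'
    exact absurd hz.2 (not_le.mpr hz'.1)
  have hmeq : μ (A ∪ (B ∪ C)) = μ A + (μ B + μ C) := by
    rw [measure_union hd1 ((measurableSet_Icc).union measurableSet_Ioo),
      measure_union hd2 measurableSet_Ioo]
  have hbA : ENNReal.ofReal (c * s) ≤ μ A := by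
    have := measure_Ioo_ge_of_density (μ := μ) hμ (by linarith : qa - s ≤ qa) hcl
    simpa using this
  have hbC : ENNReal.ofReal (c * s) ≤ μ C := by
    have := measure_Ioo_ge_of_density (μ := μ) hμ (by linarith : qb ≤ qb + s) hcu
    simpa using this
  have hbB : ENNReal.ofReal (τ' - τ) ≤ μ B := measure_Icc_Qm h0 hle h1
  calc ENNReal.ofReal (τ' - τ + 2 * (c * s))
      = ENNReal.ofReal ((τ' - τ) + (c * s + c * s)) := by ring_nf
    _ ≤ ENNReal.ofReal (τ' - τ) + ENNReal.ofReal (c * s + c * s) := ENNReal.ofReal_add_le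
    _ ≤ ENNReal.ofReal (τ' - τ) + (ENNReal.ofReal (c * s) + ENNReal.ofReal (c * s)) :=
        add_le_add_right ENNReal.ofReal_add_le _
    _ ≤ μ B + (μ A + μ C) := add_le_add hbB (add_le_add hbA hbC)
    _ = μ A + (μ B + μ C) := by ring
    _ = μ (A ∪ (B ∪ C)) := hmeq.symm
    _ ≤ μ (Icc (qa - s) (qb + s)) := measure_mono hsub

lemma Fm_split (hat : ∀ y : ℝ, μ {y} = 0) {a b : ℝ} (hab : a ≤ b) :
    Fm μ b = Fm μ a + (μ (Icc a b)).toReal := by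
  have hset : Iic b = Iio a ∪ Icc a b := by
    ext z
    simp only [mem_Iic, mem_union, mem_Iio, mem_Icc]
    constructor
    · intro h
      rcases lt_or_ge z a with h' | h'
      · exact Or.inl h'
      · exact Or.inr ⟨h', h⟩
    · rintro (h | h)
      · linarith
      · exact h.2
  have hd : Disjoint (Iio a) (Icc a b) := by
    rw [Set.disjoint_left]
    rintro z hz hz'
    exact absurd hz'.1 (not_le.mpr hz)
  have : μ (Iic b) = μ (Iio a) + μ (Icc a b) := by
    rw [hset, measure_union hd measurableSet_Icc]
  have hIio : μ (Iio a) = μ (Iic a) := measure_congr (Iio_ae_eq_Iic' (hat a))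
  rw [Fm, Fm, this, hIio, ENNReal.toReal_add (measure_ne_top μ _) (measure_ne_top μ _)]

end QPack

lemma msupp_compl_null (μ : MeasureTheory.Measure ℝ) : μ (msupp μ)ᶜ = 0 := by
  classical
  set N : Set ℝ := ⋃ pq : ℚ × ℚ, ⋃ (_ : μ (Ioo (pq.1 : ℝ) (pq.2 : ℝ)) = 0),
    Ioo (pq.1 : ℝ) (pq.2 : ℝ) with hN
  have hNnull : μ N = 0 := by
    refine measure_iUnion_null fun pq => measure_iUnion_null fun h => h
  refine measure_mono_null ?_ hNnull
  intro y hy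
  simp only [msupp, mem_compl_iff, mem_setOf_eq, not_forall] at hy
  obtain ⟨U, hU, hUpos⟩ := hy
  have hU0 : μ U = 0 := by
    by_contra h
    exact hUpos (pos_iff_ne_zero.mpr h)
  obtain ⟨a, b, hyab, hab⟩ := (mem_nhds_iff_exists_Ioo_subset).mp hU
  obtain ⟨p, hp1, hp2⟩ := exists_rat_btwn hyab.1
  obtain ⟨q, hq1, hq2⟩ := exists_rat_btwn hyab.2
  have hsub : Ioo (p : ℝ) (q : ℝ) ⊆ U := fun z hz =>
    hab ⟨lt_trans hp1 hz.1, lt_trans hz.2 hq2⟩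
  have h0 : μ (Ioo (p : ℝ) (q : ℝ)) = 0 :=
    measure_mono_null hsub hU0
  refine mem_iUnion.mpr ⟨(p, q), mem_iUnion.mpr ⟨h0, ⟨hp2, hq1⟩⟩⟩

end HTop

section Tau
variable (α : ℝ) (G : Finset ℝ) (qhat : ℝ → 𝒳 → ℝ)

lemma tauhat_spec (hGne : G.Nonempty) (x : 𝒳) :
    tauhat α G qhat x ∈ G ∧ ∀ σ ∈ G,
      qhat (1 - α + tauhat α G qhat x) x - qhat (tauhat α G qhat x) x
        ≤ qhat (1 - α + σ) x - qhat σ x := by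
  classical
  set T : Set ℝ := {τ : ℝ | τ ∈ G ∧ ∀ σ ∈ G,
    qhat (1 - α + τ) x - qhat τ x ≤ qhat (1 - α + σ) x - qhat σ x} with hT
  have hTsub : T ⊆ ↑G := fun τ hτ => hτ.1
  have hfin : T.Finite := G.finite_toSet.subset hTsub
  obtain ⟨τ₀, hτ₀G, hτ₀min⟩ :=
    G.exists_min_image (fun τ => qhat (1 - α + τ) x - qhat τ x) hGne
  have hTne : T.Nonempty := ⟨τ₀, hτ₀G, hτ₀min⟩
  exact hTne.csInf_mem hfin

lemma tauhat_eq_iff (hGne : G.Nonempty) (x : 𝒳) (g : ℝ) :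
    tauhat α G qhat x = g ↔
      (g ∈ G ∧ (∀ σ ∈ G, qhat (1 - α + g) x - qhat g x ≤ qhat (1 - α + σ) x - qhat σ x)
        ∧ ∀ g' ∈ G, g' < g →
          ¬ (∀ σ ∈ G, qhat (1 - α + g') x - qhat g' x ≤ qhat (1 - α + σ) x - qhat σ x)) := by
  classical
  obtain ⟨hmem, hmin⟩ := tauhat_spec α G qhat hGne x
  set T : Set ℝ := {τ : ℝ | τ ∈ G ∧ ∀ σ ∈ G,
    qhat (1 - α + τ) x - qhat τ x ≤ qhat (1 - α + σ) x - qhat σ x} with hT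
  have hTsub : T ⊆ ↑G := fun τ hτ => hτ.1
  have hfin : T.Finite := G.finite_toSet.subset hTsub
  have hbdd : BddBelow T := hfin.bddBelow
  constructor
  · rintro rfl
    refine ⟨hmem, hmin, fun g' hg' hlt hall => ?_⟩
    have : tauhat α G qhat x ≤ g' := csInf_le hbdd ⟨hg', hall⟩
    exact absurd this (not_le.mpr hlt)
  · rintro ⟨hg, hall, hleast⟩
    have h1 : tauhat α G qhat x ≤ g := csInf_le hbdd ⟨hg, hall⟩
    rcases lt_or_eq_of_le h1 with h | h
    · exact absurd hmin (hleast _ hmem h)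
    · exact h

lemma tauhat_fiber_measurable (hGne : G.Nonempty) (Γ : Finset ℝ)
    (hΓ : Γ = G ∪ G.image (fun g => 1 - α + g)) (hqm : ∀ γ ∈ Γ, Measurable (qhat γ))
    (g : ℝ) : MeasurableSet {x : 𝒳 | tauhat α G qhat x = g} := by
  classical
  have hqmG : ∀ g' ∈ G, Measurable fun x => qhat (1 - α + g') x - qhat g' x := by
    intro g' hg'
    have h1 : Measurable (qhat (1 - α + g')) := by
      apply hqm; rw [hΓ]; exact Finset.mem_union_right _ (Finset.mem_image_of_mem _ hg')
    have h2 : Measurable (qhat g') := by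
      apply hqm; rw [hΓ]; exact Finset.mem_union_left _ hg'
    exact h1.sub h2
  have heq : {x : 𝒳 | tauhat α G qhat x = g} =
      {x : 𝒳 | (g ∈ G ∧ (∀ σ ∈ G, qhat (1 - α + g) x - qhat g x
          ≤ qhat (1 - α + σ) x - qhat σ x)
        ∧ ∀ g' ∈ G, g' < g →
          ¬ (∀ σ ∈ G, qhat (1 - α + g') x - qhat g' x
            ≤ qhat (1 - α + σ) x - qhat σ x))} := by
    ext x; exact tauhat_eq_iff α G qhat hGne x g
  rw [heq]
  by_cases hg : g ∈ G
  · have : {x : 𝒳 | (g ∈ G ∧ (∀ σ ∈ G, qhat (1 - α + g) x - qhat g x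
          ≤ qhat (1 - α + σ) x - qhat σ x)
        ∧ ∀ g' ∈ G, g' < g →
          ¬ (∀ σ ∈ G, qhat (1 - α + g') x - qhat g' x
            ≤ qhat (1 - α + σ) x - qhat σ x))} =
        (⋂ σ ∈ G, {x : 𝒳 | qhat (1 - α + g) x - qhat g x
            ≤ qhat (1 - α + σ) x - qhat σ x}) ∩
        (⋂ g' ∈ G.filter (· < g),
          {x : 𝒳 | ∀ σ ∈ G, qhat (1 - α + g') x - qhat g' x
            ≤ qhat (1 - α + σ) x - qhat σ x}ᶜ) := by
      ext x
      simp only [mem_setOf_eq, mem_inter_iff, mem_iInter, Finset.mem_filter, mem_compl_iff]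
      constructor
      · rintro ⟨_, h2, h3⟩
        exact ⟨h2, fun g' ⟨hg', hlt⟩ => h3 g' hg' hlt⟩
      · rintro ⟨h2, h3⟩
        exact ⟨hg, h2, fun g' hg' hlt => h3 g' ⟨hg', hlt⟩⟩
    rw [this]
    refine MeasurableSet.inter ?_ ?_
    · refine MeasurableSet.biInter G.countable_toSet fun σ hσ => ?_
      exact measurableSet_le (hqmG g hg) (hqmG σ hσ)
    · refine MeasurableSet.biInter (G.filter (· < g)).countable_toSet fun g' hg' => ?_
      refine MeasurableSet.compl ?_
      have hg'G : g' ∈ G := (Finset.mem_filter.mp hg').1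
      have : {x : 𝒳 | ∀ σ ∈ G, qhat (1 - α + g') x - qhat g' x
            ≤ qhat (1 - α + σ) x - qhat σ x} =
          ⋂ σ ∈ G, {x : 𝒳 | qhat (1 - α + g') x - qhat g' x
            ≤ qhat (1 - α + σ) x - qhat σ x} := by
        ext x; simp
      rw [this]
      exact MeasurableSet.biInter G.countable_toSet fun σ hσ =>
        measurableSet_le (hqmG g' hg'G) (hqmG σ hσ)
  · have : {x : 𝒳 | (g ∈ G ∧ (∀ σ ∈ G, qhat (1 - α + g) x - qhat g x
          ≤ qhat (1 - α + σ) x - qhat σ x)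
        ∧ ∀ g' ∈ G, g' < g →
          ¬ (∀ σ ∈ G, qhat (1 - α + g') x - qhat g' x
            ≤ qhat (1 - α + σ) x - qhat σ x))} = ∅ := by
      ext x; simp only [mem_setOf_eq, mem_empty_iff_false, iff_false]
      rintro ⟨h, _, _⟩; exact hg h
    rw [this]; exact MeasurableSet.empty

/-- Composition through a finite-valued selector is measurable. -/
lemma measurable_select {G : Finset ℝ} {τh : 𝒳 → ℝ} (hmem : ∀ x, τh x ∈ G)
    (hfib : ∀ g ∈ G, MeasurableSet {x | τh x = g}) (F : ℝ → 𝒳 → ℝ)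
    (hF : ∀ g ∈ G, Measurable (F g)) : Measurable fun x => F (τh x) x := by
  classical
  have heq : (fun x => F (τh x) x)
      = fun x => ∑ g ∈ G, ({x' : 𝒳 | τh x' = g}).indicator (F g) x := by
    funext x
    rw [Finset.sum_eq_single_of_mem (τh x) (hmem x)]
    · exact (Set.indicator_of_mem (show x ∈ {x' : 𝒳 | τh x' = τh x} from rfl) (F (τh x))).symm
    · intro b hb hne
      apply Set.indicator_of_notMem
      simp only [mem_setOf_eq]
      exact fun h => hne h.symm
  rw [heq]
  exact Finset.measurable_sum _ fun g hg => (hF g hg).indicator (hfib g hg)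

end Tau


set_option maxHeartbeats 1000000 in
/-- full-oracle calibrated length bound. Under the hypotheses of the
finite-sample calibrated length oracle inequality, with `C*(x) = [a*(x), b*(x)]` a
shortest interval in `I_{1-α}(x)` and truncation cost
`R_ε = E_X[L*_ε(X)] - E_X[|C*(X)|] ≥ 0`, with probability at least `1-η` over the
calibration sample the expected calibrated length is at most
`E_X|C*(X)| + R_ε + M̄Δ + 4e + (δ_m(η) + 2/m)/c`; moreover if the oracle allocation
set is contained in `[ε, α-ε]` for every `x`, then `R_ε = 0`. -/
theorem stmt15 (α ε : ℝ) (hα : α ∈ Ioo (0:ℝ) 1) (hε : ε ∈ Ioo (0:ℝ) (α / 2))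
    (PX : Measure 𝒳) [IsProbabilityMeasure PX]
    (κ : Kernel 𝒳 ℝ) [IsMarkovKernel κ]
    (f : 𝒳 → ℝ → ℝ)
    (hdens : ∀ x, κ x = MeasureTheory.volume.withDensity fun y => ENNReal.ofReal (f x y))
    -- Assumption (D) for each conditional law: interval support, strictly positive and
    -- continuously differentiable conditional density on the support
    (hD : ∀ x, (msupp (κ x)).OrdConnected ∧ (∀ y ∈ msupp (κ x), 0 < f x y) ∧
      ContDiffOn ℝ 1 (f x) (msupp (κ x)))
    (G : Finset ℝ) (hGne : G.Nonempty) (hGsub : ↑G ⊆ Icc ε (α - ε))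
    (Δ : ℝ) (hmesh : ∀ τ ∈ Icc ε (α - ε), ∃ g ∈ G, |τ - g| ≤ Δ)
    (Γ : Finset ℝ) (hΓ : Γ = G ∪ G.image (fun g => 1 - α + g))
    (qhat : ℝ → 𝒳 → ℝ) (hqm : ∀ γ ∈ Γ, Measurable (qhat γ))
    (hmono : ∀ x, ∀ γ₁ ∈ Γ, ∀ γ₂ ∈ Γ, γ₁ ≤ γ₂ → qhat γ₁ x ≤ qhat γ₂ x)
    (e : ℝ) (he : ∀ x, ∀ γ ∈ Γ, |qhat γ x - cq κ γ x| ≤ e)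
    (M : 𝒳 → ℝ) (hMint : Integrable M PX)
    (hLip : ∀ x, ∀ s ∈ Icc ε (α - ε), ∀ t ∈ Icc ε (α - ε),
      |cL κ α s x - cL κ α t x| ≤ M x * |s - t|)
    (t c : ℝ) (ht : 0 < t) (hc : 0 < c)
    (hLD : ∀ x, ∀ τ ∈ Icc ε (α - ε), ∀ y : ℝ,
      (|y - cq κ τ x| ≤ t ∨ |y - cq κ (1 - α + τ) x| ≤ t) → c ≤ f x y)
    (hLsint : Integrable (fun x => cLstar κ α ε x) PX)
    {Ω : Type*} [MeasurableSpace Ω] (P : Measure Ω) [IsProbabilityMeasure P]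
    (m : ℕ) (hm : 0 < m)
    (Z : Fin m → Ω → 𝒳 × ℝ) (hZm : ∀ i, Measurable (Z i))
    (hiid : iIndepFun Z P)
    (hlaw : ∀ i, Measure.map (Z i) P = PX ⊗ₘ κ)
    (k : ℕ) (hk : k = ⌈((m : ℝ) + 1) * (1 - α)⌉₊) (hkm : k ≤ m)
    (η : ℝ) (hη : η ∈ Ioo (0:ℝ) 1)
    (hfeas : e + (Real.sqrt (Real.log (2 / η) / (2 * m)) + 2 / m) / (2 * c) ≤ t)
    -- a conditionally shortest interval C*(x) = [astar x, bstar x]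
    (astar bstar : 𝒳 → ℝ)
    (hCint : Integrable (fun x => bstar x - astar x) PX)
    (hCle : ∀ x, astar x ≤ bstar x)
    (hCmass : ∀ x, 1 - α ≤ ((κ x) (Icc (astar x) (bstar x))).toReal)
    (hCmin : ∀ x, ∀ a b : ℝ, a ≤ b → 1 - α ≤ ((κ x) (Icc a b)).toReal →
      bstar x - astar x ≤ b - a)
    -- truncation cost
    (Rε : ℝ)
    (hRε : Rε = (∫ x, cLstar κ α ε x ∂PX) - ∫ x, (bstar x - astar x) ∂PX) :
    0 ≤ Rε ∧
    ENNReal.ofReal (1 - η) ≤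
      P {ω |
        (∫ x, (qhat (1 - α + tauhat α G qhat x) x - qhat (tauhat α G qhat x) x
            + 2 * kthSmallest m (fun i => taScore α G qhat (Z i ω)) k) ∂PX)
        ≤ (∫ x, (bstar x - astar x) ∂PX) + Rε + (∫ x, M x ∂PX) * Δ + 4 * e
            + (Real.sqrt (Real.log (2 / η) / (2 * m)) + 2 / m) / c} ∧
    ((∀ x, ∀ τ ∈ Icc (0:ℝ) α,
        (∀ σ ∈ Icc (0:ℝ) α, cLE κ α τ x ≤ cLE κ α σ x) → τ ∈ Icc ε (α - ε)) →
      Rε = 0) := by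
  classical
  obtain ⟨hα0, hα1⟩ := hα
  obtain ⟨hε0, hε2⟩ := hε
  obtain ⟨hη0, hη1⟩ := hη
  have hεα : ε ≤ α - ε := by linarith
  have hm' : (0:ℝ) < m := by exact_mod_cast hm
  have hXne : Nonempty 𝒳 := by
    by_contra h
    rw [not_nonempty_iff] at h
    have h1 : PX univ = 1 := measure_univ
    rw [Set.univ_eq_empty_iff.mpr h, measure_empty] at h1
    exact zero_ne_one h1
  have hat : ∀ x : 𝒳, ∀ y : ℝ, κ x {y} = 0 := by
    intro x y
    rw [hdens x]
    refine withDensity_absolutelyContinuous _ _ ?_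
    simp
  have hcqQ : ∀ (τ : ℝ) (x : 𝒳), cq κ τ x = QPack.Qm (κ x) τ := fun _ _ => rfl
  set δ := Real.sqrt (Real.log (2 / η) / (2 * m)) with hδdef
  have hδ0 : 0 ≤ δ := Real.sqrt_nonneg _
  have hs0 : 0 ≤ (δ + 2 / m) / (2 * c) := by positivity
  have he0 : 0 ≤ e := by
    obtain ⟨g, hg⟩ := hGne
    have hgΓ : g ∈ Γ := by rw [hΓ]; exact Finset.mem_union_left _ hg
    exact le_trans (abs_nonneg _) (he (Classical.arbitrary 𝒳) g hgΓ)
  set s := (δ + 2 / m) / (2 * c) with hsdef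
  set qstar := e + s with hqstardef
  have hqstar0 : 0 ≤ qstar := add_nonneg he0 hs0
  have hst : s ≤ t := by linarith [hfeas]
  have hΓmem : ∀ g ∈ G, g ∈ Γ := fun g hg => by
    rw [hΓ]; exact Finset.mem_union_left _ hg
  have hΓmem' : ∀ g ∈ G, (1 - α + g) ∈ Γ := fun g hg => by
    rw [hΓ]; exact Finset.mem_union_right _ (Finset.mem_image_of_mem _ hg)
  have hM0 : ∀ x, 0 ≤ M x := by
    intro x
    have h3 := hLip x ε ⟨le_rfl, hεα⟩ (α - ε) ⟨hεα, le_rfl⟩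
    have h4 : |ε - (α - ε)| = α - 2*ε := by
      rw [abs_of_nonpos (by linarith)]; ring
    rw [h4] at h3
    nlinarith [abs_nonneg (cL κ α ε x - cL κ α (α - ε) x)]
  have hΔ0 : 0 ≤ Δ := by
    obtain ⟨g, hg, habs⟩ := hmesh ε ⟨le_rfl, hεα⟩
    exact le_trans (abs_nonneg _) habs
  have hbound : ∀ x τ, 0 < τ → τ < α → bstar x - astar x ≤ cL κ α τ x := by
    intro x τ h0 hτα
    have hle' : τ ≤ 1 - α + τ := by linarith
    have h1' : 1 - α + τ < 1 := by linarith
    have hmass := QPack.measure_Icc_Qm_toReal (μ := κ x) h0 hle' h1'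
    have hq : QPack.Qm (κ x) τ ≤ QPack.Qm (κ x) (1 - α + τ) := QPack.Qm_mono h0 hle' h1'
    have hmin := hCmin x (QPack.Qm (κ x) τ) (QPack.Qm (κ x) (1 - α + τ)) hq
      (by calc (1:ℝ) - α = (1 - α + τ) - τ := by ring
          _ ≤ _ := hmass)
    calc bstar x - astar x ≤ QPack.Qm (κ x) (1 - α + τ) - QPack.Qm (κ x) τ := hmin
    _ = cL κ α τ x := by rw [cL, hcqQ, hcqQ]
  have hlen : ∀ x, bstar x - astar x ≤ cLstar κ α ε x := by
    intro x
    refine le_csInf ⟨cL κ α ε x, ⟨ε, ⟨le_rfl, hεα⟩, rfl⟩⟩ ?_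
    rintro v ⟨τ, ⟨hτ1, hτ2⟩, rfl⟩
    exact hbound x τ (lt_of_lt_of_le hε0 hτ1) (by linarith)
  have hRε0 : 0 ≤ Rε := by
    rw [hRε, sub_nonneg]
    exact integral_mono hCint hLsint hlen
  have hspec := tauhat_spec α G qhat hGne
  refine ⟨hRε0, ?_, ?_⟩
  · -- ========== probability bound ==========
    have hpoint : ∀ x, qhat (1 - α + tauhat α G qhat x) x - qhat (tauhat α G qhat x) x
        ≤ cLstar κ α ε x + M x * Δ + 2 * e := by
      intro x
      have hminx := (hspec x).2
      have hkey : ∀ τ ∈ Icc ε (α - ε),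
          qhat (1 - α + tauhat α G qhat x) x - qhat (tauhat α G qhat x) x
            - M x * Δ - 2 * e ≤ cL κ α τ x := by
        intro τ hτ
        obtain ⟨g, hgG, hgΔ⟩ := hmesh τ hτ
        have hgIcc : g ∈ Icc ε (α - ε) := hGsub hgG
        have h1 := hminx g hgG
        have h2a := abs_le.mp (he x g (hΓmem g hgG))
        have h2b := abs_le.mp (he x (1 - α + g) (hΓmem' g hgG))
        have h3 : qhat (1 - α + g) x - qhat g x ≤ cL κ α g x + 2 * e := by
          rw [cL]; linarith [h2a.1, h2a.2, h2b.1, h2b.2]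
        have h4 := hLip x g hgIcc τ hτ
        have h5 : |g - τ| ≤ Δ := by rw [abs_sub_comm]; exact hgΔ
        have h6 : cL κ α g x ≤ cL κ α τ x + M x * Δ := by
          have h7 := le_trans (le_abs_self (cL κ α g x - cL κ α τ x))
            (le_trans h4 (mul_le_mul_of_nonneg_left h5 (hM0 x)))
          linarith
        linarith
      have hcs : qhat (1 - α + tauhat α G qhat x) x - qhat (tauhat α G qhat x) x
            - M x * Δ - 2 * e ≤ cLstar κ α ε x := by
        refine le_csInf ⟨cL κ α ε x, ⟨ε, ⟨le_rfl, hεα⟩, rfl⟩⟩ ?_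
        rintro v ⟨τ, hτ, rfl⟩
        exact hkey τ hτ
      linarith
    have hdpos : ∀ x, 0 ≤ qhat (1 - α + tauhat α G qhat x) x
        - qhat (tauhat α G qhat x) x := by
      intro x
      have := hmono x (tauhat α G qhat x) (hΓmem _ (hspec x).1)
        (1 - α + tauhat α G qhat x) (hΓmem' _ (hspec x).1) (by linarith)
      linarith
    have hfib := fun g => tauhat_fiber_measurable α G qhat hGne Γ hΓ hqm g
    have hqA : Measurable fun x => qhat (tauhat α G qhat x) x :=
      measurable_select (fun x => (hspec x).1) (fun g _ => hfib g) (fun g => qhat g)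
        (fun g hg => hqm g (hΓmem g hg))
    have hqB : Measurable fun x => qhat (1 - α + tauhat α G qhat x) x :=
      measurable_select (fun x => (hspec x).1) (fun g _ => hfib g)
        (fun g => qhat (1 - α + g)) (fun g hg => hqm _ (hΓmem' g hg))
    have hTmeas : Measurable (taScore α G qhat : 𝒳 × ℝ → ℝ) := by
      unfold taScore
      apply Measurable.max _ measurable_const
      apply Measurable.max
      · exact (hqA.comp measurable_fst).sub measurable_snd
      · exact measurable_snd.sub (hqB.comp measurable_fst)
    set Sset : Set (𝒳 × ℝ) := {p | taScore α G qhat p ≤ qstar} with hSdef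
    have hSmeas : MeasurableSet Sset := measurableSet_le hTmeas measurable_const
    set pbar := 1 - α + (δ + 2 / m) with hpbardef
    have hcov : ∀ x, ENNReal.ofReal pbar
        ≤ κ x {y | taScore α G qhat (x, y) ≤ qstar} := by
      intro x
      have hτG := (hspec x).1
      have hτIcc : tauhat α G qhat x ∈ Icc ε (α - ε) := hGsub hτG
      set τh := tauhat α G qhat x with hτdef
      have h0 : 0 < τh := lt_of_lt_of_le hε0 hτIcc.1
      have hle' : τh ≤ 1 - α + τh := by linarith
      have h1' : 1 - α + τh < 1 := by
        have := hτIcc.2; linarith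
      have hseq : {y : ℝ | taScore α G qhat (x, y) ≤ qstar}
          = Icc (qhat τh x - qstar) (qhat (1 - α + τh) x + qstar) := by
        ext y
        simp only [taScore, mem_setOf_eq, mem_Icc, max_le_iff, ← hτdef]
        constructor
        · rintro ⟨⟨ha1, ha2⟩, _⟩
          constructor <;> linarith
        · rintro ⟨ha1, ha2⟩
          exact ⟨⟨by linarith, by linarith⟩, hqstar0⟩
      rw [hseq]
      have habs1 := abs_le.mp (he x τh (hΓmem _ hτG))
      have habs2 := abs_le.mp (he x (1 - α + τh) (hΓmem' _ hτG))
      have hsub : Icc (QPack.Qm (κ x) τh - s) (QPack.Qm (κ x) (1 - α + τh) + s)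
          ⊆ Icc (qhat τh x - qstar) (qhat (1 - α + τh) x + qstar) := by
        apply Icc_subset_Icc
        · rw [← hcqQ]
          have := habs1.2
          simp only [hqstardef]
          linarith
        · rw [← hcqQ]
          have := habs2.1
          simp only [hqstardef]
          linarith
      refine le_trans ?_ (measure_mono hsub)
      have hcl : ∀ y ∈ Icc (QPack.Qm (κ x) τh - s) (QPack.Qm (κ x) τh), c ≤ f x y := by
        intro y hy
        refine hLD x τh hτIcc y (Or.inl ?_)
        rw [hcqQ, abs_le]
        exact ⟨by linarith [hy.1, hst], by linarith [hy.2, ht.le]⟩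
      have hcu : ∀ y ∈ Icc (QPack.Qm (κ x) (1 - α + τh))
          (QPack.Qm (κ x) (1 - α + τh) + s), c ≤ f x y := by
        intro y hy
        refine hLD x τh hτIcc y (Or.inr ?_)
        rw [hcqQ, abs_le]
        exact ⟨by linarith [hy.1, ht.le], by linarith [hy.2, hst]⟩
      have hcv := QPack.coverage (μ := κ x) (hdens x) h0 hle' h1' hs0 hcl hcu
      have hc' : c ≠ 0 := ne_of_gt hc
      have h2cs : 2 * (c * s) = δ + 2 / m := by
        rw [hsdef]; field_simp
      have harr : (1 - α + τh) - τh + 2 * (c * s) = pbar := by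
        rw [hpbardef, h2cs]; ring
      rwa [harr] at hcv
    set A : Fin m → Set Ω := fun i => Z i ⁻¹' Sset with hAdef
    have hAmeas : ∀ i, MeasurableSet (A i) := fun i => (hZm i) hSmeas
    have hPA : ∀ i, ENNReal.ofReal pbar ≤ P (A i) := by
      intro i
      have h1 : P (A i) = (PX ⊗ₘ κ) Sset := by
        rw [hAdef, ← Measure.map_apply (hZm i) hSmeas, hlaw i]
      rw [h1, Measure.compProd_apply hSmeas]
      have h2 : ∀ x, ENNReal.ofReal pbar ≤ κ x (Prod.mk x ⁻¹' Sset) := fun x => hcov x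
      calc ENNReal.ofReal pbar = ∫⁻ _, ENNReal.ofReal pbar ∂PX := by
            rw [lintegral_const, measure_univ, mul_one]
      _ ≤ ∫⁻ x, κ x (Prod.mk x ⁻¹' Sset) ∂PX := lintegral_mono h2
    have hind : iIndepFun
        (fun i => (A i).indicator (fun _ => (1:ℝ))) P := by
      have hcomp := hiid.comp (fun _ => Sset.indicator (fun _ => (1:ℝ)))
        (fun _ => measurable_const.indicator hSmeas)
      have heq2 : (fun i => Sset.indicator (fun _ => (1:ℝ)) ∘ Z i)
          = fun i => (A i).indicator (fun _ => (1:ℝ)) := by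
        funext i ω
        by_cases h : Z i ω ∈ Sset
        · simp only [Function.comp_apply, Set.indicator_of_mem h, hAdef,
            Set.indicator_of_mem (show ω ∈ Z i ⁻¹' Sset from h)]
        · simp only [Function.comp_apply, Set.indicator_of_notMem h, hAdef,
            Set.indicator_of_notMem (show ω ∉ Z i ⁻¹' Sset from h)]
      rwa [heq2] at hcomp
    have hp0' : 0 ≤ pbar := by
      have h2m : (0:ℝ) < 2 / m := by positivity
      rw [hpbardef]; linarith
    have hkc : ((k:ℝ)) - 1 ≤ m * pbar - (m * δ + 1) := by
      have h1 : (k:ℝ) < ((m:ℝ) + 1) * (1 - α) + 1 := by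
        rw [hk]
        exact Nat.ceil_lt_add_one (by nlinarith)
      have h2 : (m:ℝ) * pbar = m * (1 - α) + m * δ + 2 := by
        rw [hpbardef]; field_simp; ring
      nlinarith
    have htail := binom_tail P m hm A hAmeas hind pbar hp0' hPA δ hδ0 ((k:ℝ) - 1) hkc
    set E : Set Ω := {ω | (k:ℕ) ≤ (Finset.univ.filter
        fun i => taScore α G qhat (Z i ω) ≤ qstar).card} with hEdef
    have hsum : ∀ ω, (∑ i, (A i).indicator (fun _ => (1:ℝ))) ω
        = ((Finset.univ.filter
          fun i => taScore α G qhat (Z i ω) ≤ qstar).card : ℝ) := by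
      intro ω
      simp only [Finset.sum_apply, Set.indicator_apply, hAdef, mem_preimage, hSdef,
        mem_setOf_eq]
      rw [Finset.sum_boole]
    have hEc : Eᶜ = {ω | (∑ i, (A i).indicator (fun _ => (1:ℝ))) ω ≤ (k:ℝ) - 1} := by
      ext ω
      simp only [hEdef, mem_compl_iff, mem_setOf_eq, not_le, hsum ω]
      constructor
      · intro h
        have h2 : ((Finset.univ.filter
            fun i => taScore α G qhat (Z i ω) ≤ qstar).card : ℝ) + 1 ≤ (k:ℝ) := by
          exact_mod_cast h
        linarith
      · intro h
        have h2 : ((Finset.univ.filter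
            fun i => taScore α G qhat (Z i ω) ≤ qstar).card : ℝ) + 1 ≤ (k:ℝ) := by
          linarith
        exact_mod_cast h2
    have hSmeasΩ : Measurable (∑ i, (A i).indicator (fun _ => (1:ℝ)) : Ω → ℝ) := by
      have hfe : (∑ i, (A i).indicator (fun _ => (1:ℝ)) : Ω → ℝ)
          = fun ω => ∑ i, (A i).indicator (fun _ => (1:ℝ)) ω := by
        funext ω; exact Finset.sum_apply _ _ _
      rw [hfe]
      exact Finset.measurable_sum _ fun i _ => measurable_const.indicator (hAmeas i)
    have hEmeas : MeasurableSet E := by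
      have hrepr : E = (∑ i, (A i).indicator (fun _ => (1:ℝ))) ⁻¹' (Ici ((k:ℝ))) := by
        ext ω
        simp only [hEdef, mem_setOf_eq, mem_preimage, mem_Ici, hsum ω]
        exact ⟨fun h => by exact_mod_cast h, fun h => by exact_mod_cast h⟩
      rw [hrepr]
      exact hSmeasΩ measurableSet_Ici
    have hexpval : Real.exp (-(2 * m * δ ^ 2)) = η / 2 := by
      have hlognn : 0 ≤ Real.log (2 / η) :=
        Real.log_nonneg (by rw [le_div_iff₀ hη0]; linarith)
      have hδsq : δ ^ 2 = Real.log (2 / η) / (2 * m) := Real.sq_sqrt (by positivity)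
      have harr2 : -(2 * (m:ℝ) * δ ^ 2) = -Real.log (2 / η) := by
        rw [hδsq]; field_simp
      rw [harr2, Real.exp_neg, Real.exp_log (by positivity), inv_div]
    have htail2 : (P Eᶜ).toReal ≤ η := by
      rw [hEc]
      calc (P {ω | (∑ i, (A i).indicator (fun _ => (1:ℝ))) ω ≤ (k:ℝ) - 1}).toReal
          ≤ Real.exp (-(2 * m * δ ^ 2)) := htail
      _ = η / 2 := hexpval
      _ ≤ η := by linarith
    have hPE : ENNReal.ofReal (1 - η) ≤ P E := by
      have h1 : P Eᶜ ≤ ENNReal.ofReal η := by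
        rw [← ENNReal.ofReal_toReal (measure_ne_top P Eᶜ)]
        exact ENNReal.ofReal_le_ofReal htail2
      calc ENNReal.ofReal (1 - η) = 1 - ENNReal.ofReal η := by
            rw [ENNReal.ofReal_sub _ (le_of_lt hη0), ENNReal.ofReal_one]
      _ ≤ 1 - P Eᶜ := tsub_le_tsub_left h1 1
      _ = P E := by rw [← prob_compl_eq_one_sub hEmeas.compl, compl_compl]
    refine le_trans hPE (measure_mono ?_)
    intro ω hω
    simp only [hEdef, mem_setOf_eq] at hω
    simp only [mem_setOf_eq]
    have hk1 : 1 ≤ k := by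
      rw [hk]
      exact Nat.one_le_ceil_iff.mpr (by nlinarith)
    have hQle : kthSmallest m (fun i => taScore α G qhat (Z i ω)) k ≤ qstar :=
      kthSmallest_le _ hk1 qstar hω
    have hQ0 : 0 ≤ kthSmallest m (fun i => taScore α G qhat (Z i ω)) k :=
      kthSmallest_nonneg _ (fun i => le_max_right _ 0) hk1 hkm
    set Q := kthSmallest m (fun i => taScore α G qhat (Z i ω)) k with hQdef
    have hgint : Integrable (fun x => cLstar κ α ε x + (M x * Δ + (2*e + 2*qstar))) PX :=
      hLsint.add ((hMint.mul_const Δ).add (integrable_const _))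
    have hle2 : (∫ x, (qhat (1 - α + tauhat α G qhat x) x - qhat (tauhat α G qhat x) x
          + 2 * Q) ∂PX)
        ≤ ∫ x, (cLstar κ α ε x + (M x * Δ + (2*e + 2*qstar))) ∂PX := by
      apply integral_mono_of_nonneg
      · exact ae_of_all _ fun x => add_nonneg (hdpos x) (by linarith)
      · exact hgint
      · refine ae_of_all _ fun x => ?_
        show qhat (1 - α + tauhat α G qhat x) x - qhat (tauhat α G qhat x) x + 2 * Q
          ≤ cLstar κ α ε x + (M x * Δ + (2 * e + 2 * qstar))
        have h1 := hpoint x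
        linarith [hQle]
    have h3 : (∫ x, cLstar κ α ε x ∂PX) = (∫ x, (bstar x - astar x) ∂PX) + Rε := by
      rw [hRε]; ring
    have h2q : 2 * qstar = 2 * e + (δ + 2/m)/c := by
      have hc' : c ≠ 0 := ne_of_gt hc
      rw [hqstardef, hsdef]; field_simp
    have hval : ∫ x, (cLstar κ α ε x + (M x * Δ + (2*e + 2*qstar))) ∂PX
        = (∫ x, (bstar x - astar x) ∂PX) + Rε + (∫ x, M x ∂PX) * Δ + 4 * e
          + (δ + 2/m)/c := by
      have iMc : Integrable (fun x => M x * Δ + (2*e+2*qstar)) PX :=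
        (hMint.mul_const Δ).add (integrable_const _)
      have e1 : ∫ x, (cLstar κ α ε x + (M x * Δ + (2*e+2*qstar))) ∂PX
          = (∫ x, cLstar κ α ε x ∂PX) + ∫ x, (M x * Δ + (2*e+2*qstar)) ∂PX :=
        integral_add hLsint iMc
      have e2 : ∫ x, (M x * Δ + (2*e+2*qstar)) ∂PX
          = (∫ x, M x * Δ ∂PX) + ∫ _x, (2*e+2*qstar) ∂PX :=
        integral_add (hMint.mul_const Δ) (integrable_const _)
      have e3 : ∫ x, M x * Δ ∂PX = (∫ x, M x ∂PX) * Δ := integral_mul_const Δ M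
      have e4 : ∫ _x : 𝒳, (2*e+2*qstar) ∂PX = 2*e+2*qstar := by
        rw [integral_const]; simp [measure_univ]
      rw [e1, e2, e3, e4, hRε]
      linarith [h2q]
    rw [← hval]
    exact hle2
  · -- ========== Rε = 0 under interior-argmin hypothesis ==========
    intro hH
    have hrev : ∀ x, cLstar κ α ε x ≤ bstar x - astar x := by
      intro x
      obtain ⟨hord, hfpos, hfcont⟩ := hD x
      have hab := hCle x
      have hcompl : (κ x) (msupp (κ x))ᶜ = 0 := msupp_compl_null (κ x)
      have hSc : IsClosed (msupp (κ x)) := by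
        rw [← isOpen_compl_iff, isOpen_iff_mem_nhds]
        intro y hy
        simp only [msupp, mem_compl_iff, mem_setOf_eq] at hy
        push_neg at hy
        obtain ⟨U, hU, hUpos⟩ := hy
        obtain ⟨V, hVU, hVopen, hyV⟩ := mem_nhds_iff.mp hU
        have hV0 : (κ x) V = 0 := le_antisymm (le_trans (measure_mono hVU) hUpos) zero_le
        refine mem_nhds_iff.mpr ⟨V, ?_, hVopen, hyV⟩
        intro z hz
        simp only [msupp, mem_compl_iff, mem_setOf_eq]
        push_neg
        exact ⟨V, hVopen.mem_nhds hz, le_of_eq hV0⟩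
      have hSne : (msupp (κ x)).Nonempty := by
        rw [nonempty_iff_ne_empty]
        intro hemp
        rw [hemp, compl_empty] at hcompl
        have h1 : (κ x) univ = 1 := measure_univ
        rw [hcompl] at h1
        exact zero_ne_one h1
      have hright : ∀ u : ℝ, 0 < u → 0 < (κ x) (Ico (astar x) ((astar x) + u)) := by
        intro u hu
        by_contra hzero
        push_neg at hzero
        have hz0 : (κ x) (Ico (astar x) ((astar x) + u)) = 0 := le_antisymm hzero zero_le
        rcases le_or_gt ((astar x) + u) (bstar x) with hle2 | hlt2
        · have hsub : Icc (astar x) (bstar x) ⊆ Ico (astar x) ((astar x) + u) ∪ Icc ((astar x) + u) (bstar x) := by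
            intro z hz
            rcases lt_or_ge z ((astar x) + u) with h | h
            · exact Or.inl ⟨hz.1, h⟩
            · exact Or.inr ⟨h, hz.2⟩
          have hmle : (κ x) (Icc (astar x) (bstar x)) ≤ (κ x) (Icc ((astar x) + u) (bstar x)) := by
            calc (κ x) (Icc (astar x) (bstar x)) ≤ (κ x) (Ico (astar x) ((astar x) + u)) + (κ x) (Icc ((astar x) + u) (bstar x)) :=
                le_trans (measure_mono hsub) (measure_union_le _ _)
            _ = (κ x) (Icc ((astar x) + u) (bstar x)) := by rw [hz0, zero_add]
          have h1 : 1 - α ≤ ((κ x) (Icc ((astar x) + u) (bstar x))).toReal :=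
            le_trans (hCmass x) (ENNReal.toReal_mono (measure_ne_top _ _) hmle)
          have := hCmin x ((astar x) + u) (bstar x) hle2 h1
          linarith
        · have hsub : Icc (astar x) (bstar x) ⊆ Ico (astar x) ((astar x) + u) := fun z hz =>
            ⟨hz.1, lt_of_le_of_lt hz.2 hlt2⟩
          have h1 : (κ x) (Icc (astar x) (bstar x)) = 0 := measure_mono_null hsub hz0
          have h2 := hCmass x
          rw [h1] at h2
          simp only [ENNReal.toReal_zero] at h2
          linarith
      have haS : (astar x) ∈ msupp (κ x) := by
        intro U hU
        obtain ⟨l, r, ⟨hl, hr⟩, hsub⟩ := mem_nhds_iff_exists_Ioo_subset.mp hU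
        refine lt_of_lt_of_le (hright (r - (astar x)) (by linarith)) (measure_mono ?_)
        intro z hz
        exact hsub ⟨lt_of_lt_of_le hl hz.1, by linarith [hz.2]⟩
      set σ0 := QPack.Fm (κ x) (astar x) with hσ0def
      have hFb : QPack.Fm (κ x) (bstar x) = σ0 + ((κ x) (Icc (astar x) (bstar x))).toReal :=
        QPack.Fm_split (hat x) hab
      have hFble : QPack.Fm (κ x) (bstar x) ≤ 1 := by
        have h1 : (κ x) (Iic (bstar x)) ≤ 1 := prob_le_one
        calc ((κ x) (Iic (bstar x))).toReal ≤ (1 : ℝ≥0∞).toReal :=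
            ENNReal.toReal_mono ENNReal.one_ne_top h1
        _ = 1 := by simp
      have hmassab := hCmass x
      have hσ0nn : 0 ≤ σ0 := ENNReal.toReal_nonneg
      have hσ0α : σ0 ≤ α := by linarith
      -- Claim (I): a ≤ cqE σ0
      have haq : ((astar x) : EReal) ≤ cqE κ σ0 x := by
        rcases eq_or_lt_of_le hσ0nn with h0 | h0
        · rw [cqE, if_pos (le_of_eq h0.symm)]
          refine le_sInf ?_
          rintro w ⟨z, hz, rfl⟩
          rw [EReal.coe_le_coe_iff]
          by_contra hlt
          push_neg at hlt
          have hIa : (κ x) (Iic (astar x)) = 0 := by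
            have h1 : ((κ x) (Iic (astar x))).toReal = 0 := h0.symm
            rcases (ENNReal.toReal_eq_zero_iff _).mp h1 with h | h
            · exact h
            · exact absurd h (measure_ne_top _ _)
          have hIo : (κ x) (Iio (astar x)) = 0 := measure_mono_null Iio_subset_Iic_self hIa
          have := hz (Iio (astar x)) (Iio_mem_nhds hlt)
          rw [hIo] at this
          exact lt_irrefl 0 this
        · have hσ1 : σ0 < 1 := lt_of_le_of_lt hσ0α hα1
          rw [cqE, if_neg (not_le.mpr h0), if_neg (not_le.mpr hσ1)]
          rw [EReal.coe_le_coe_iff]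
          by_contra hlt
          push_neg at hlt
          rw [hcqQ] at hlt
          have hFq_ge : σ0 ≤ QPack.Fm (κ x) (QPack.Qm (κ x) σ0) := QPack.Fm_Qm_ge h0 hσ1
          have hFq_le : QPack.Fm (κ x) (QPack.Qm (κ x) σ0) ≤ σ0 :=
            QPack.Fm_mono (le_of_lt hlt)
          have hqS : QPack.Qm (κ x) σ0 ∈ msupp (κ x) := by
            intro U hU
            obtain ⟨l, r, ⟨hl, hr⟩, hsub⟩ := mem_nhds_iff_exists_Ioo_subset.mp hU
            have hsub2 : Ioc l (QPack.Qm (κ x) σ0) ⊆ U := fun z hz =>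
              hsub ⟨hz.1, lt_of_le_of_lt hz.2 hr⟩
            refine lt_of_lt_of_le ?_ (measure_mono hsub2)
            have hFl : QPack.Fm (κ x) l < σ0 := QPack.Fm_lt_of_lt_Qm h0 hl
            have hlt2 : (κ x) (Iic l) < (κ x) (Iic (QPack.Qm (κ x) σ0)) := by
              have h1 : (κ x) (Iic l) < ENNReal.ofReal σ0 := by
                rw [← ENNReal.ofReal_toReal (measure_ne_top (κ x) (Iic l))]
                exact (ENNReal.ofReal_lt_ofReal_iff h0).mpr hFl
              exact lt_of_lt_of_le h1 (QPack.mem_S_iff.mp hFq_ge)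
            have hdiff : Ioc l (QPack.Qm (κ x) σ0) = Iic (QPack.Qm (κ x) σ0) \ Iic l :=
              (Iic_sdiff_Iic).symm
            rw [hdiff, measure_diff (Iic_subset_Iic.mpr (le_of_lt hl))
              measurableSet_Iic.nullMeasurableSet (measure_ne_top _ _)]
            exact tsub_pos_of_lt hlt2
          have hIoc0 : (κ x) (Ioc (QPack.Qm (κ x) σ0) (astar x)) = 0 := by
            have heq2 : (κ x) (Iic (QPack.Qm (κ x) σ0)) = (κ x) (Iic (astar x)) := by
              refine le_antisymm (measure_mono (Iic_subset_Iic.mpr (le_of_lt hlt))) ?_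
              have h3 : QPack.Fm (κ x) (QPack.Qm (κ x) σ0) = σ0 := le_antisymm hFq_le hFq_ge
              have h4 : QPack.Fm (κ x) (astar x) = QPack.Fm (κ x) (QPack.Qm (κ x) σ0) := by
                rw [h3]
                try exact hσ0def.symm
              exact (ENNReal.toReal_le_toReal (measure_ne_top _ _) (measure_ne_top _ _)).mp
                (le_of_eq h4)
            have hdiff : Ioc (QPack.Qm (κ x) σ0) (astar x) = Iic (astar x) \ Iic (QPack.Qm (κ x) σ0) :=
              (Iic_sdiff_Iic).symm
            rw [hdiff, measure_diff (Iic_subset_Iic.mpr (le_of_lt hlt))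
              measurableSet_Iic.nullMeasurableSet (measure_ne_top _ _), heq2, tsub_self]
          -- positivity of the gap via the density
          set q := QPack.Qm (κ x) σ0 with hqdef2
          set w := (q + (astar x)) / 2 with hwdef
          have hqw : q < w := by rw [hwdef]; linarith
          have hwa : w < (astar x) := by rw [hwdef]; linarith
          have hIccS : Icc q (astar x) ⊆ msupp (κ x) := hord.out hqS haS
          have hwS : w ∈ msupp (κ x) := hIccS ⟨le_of_lt hqw, le_of_lt hwa⟩
          have hfw : 0 < f x w := hfpos w hwS
          have hcw : ContinuousWithinAt (f x) (msupp (κ x)) w :=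
            (hfcont.continuousOn) w hwS
          have hev : ∀ᶠ y in nhdsWithin w (msupp (κ x)), f x w / 2 < f x y :=
            hcw.eventually (eventually_gt_nhds (by linarith))
          obtain ⟨U, hUopen, hwU, hUS⟩ := mem_nhdsWithin.mp hev
          obtain ⟨l, r, ⟨hl, hr⟩, hsubU⟩ :=
            mem_nhds_iff_exists_Ioo_subset.mp (hUopen.mem_nhds hwU)
          set l' := max l q with hl'def
          set r' := min r (astar x) with hr'def
          have hl'w : l' < w := max_lt hl hqw
          have hwr' : w < r' := lt_min hr hwa
          set u := (l' + w) / 2 with hudef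
          set v := (w + r') / 2 with hvdef
          have huv : u ≤ v := by rw [hudef, hvdef]; linarith
          have hbnd2 : ∀ y ∈ Icc u v, f x w / 2 ≤ f x y := by
            intro y hy
            have hyl : l' < y := by
              have := hy.1; rw [hudef] at this; linarith
            have hyr : y < r' := by
              have := hy.2; rw [hvdef] at this; linarith
            have hyU : y ∈ U := hsubU ⟨lt_of_le_of_lt (le_max_left l q) hyl,
              lt_of_lt_of_le hyr (min_le_left r (astar x))⟩
            have hyS : y ∈ msupp (κ x) := hIccS
              ⟨le_of_lt (lt_of_le_of_lt (le_max_right l q) hyl),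
               le_of_lt (lt_of_lt_of_le hyr (min_le_right r (astar x)))⟩
            exact le_of_lt (hUS ⟨hyU, hyS⟩)
          have hlow := QPack.measure_Ioo_ge_of_density (μ := κ x) (hdens x) huv hbnd2
          have hIoosub : Ioo u v ⊆ Ioc q (astar x) := by
            intro z hz
            constructor
            · calc q ≤ l' := le_max_right l q
              _ < u := by rw [hudef]; linarith
              _ < z := hz.1
            · calc z ≤ v := le_of_lt hz.2
              _ ≤ r' := by rw [hvdef]; linarith
              _ ≤ (astar x) := min_le_right r (astar x)
          have hpos2 : 0 < (κ x) (Ioo u v) := by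
            refine lt_of_lt_of_le ?_ hlow
            rw [ENNReal.ofReal_pos]
            have : u < v := by rw [hudef, hvdef]; linarith
            nlinarith
          have := measure_mono_null hIoosub hIoc0
          rw [this] at hpos2
          exact lt_irrefl 0 hpos2
      -- Claim (II): cqE (1-α+σ0) ≤ b
      have hqb : cqE κ (1 - α + σ0) x ≤ ((bstar x) : EReal) := by
        have h1b : 1 - α + σ0 ≤ QPack.Fm (κ x) (bstar x) := by linarith
        rcases lt_or_eq_of_le hσ0α with hltα | heqα
        · have hl1 : 1 - α + σ0 < 1 := by linarith
          have hl0 : 0 < 1 - α + σ0 := by linarith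
          rw [cqE, if_neg (not_le.mpr hl0), if_neg (not_le.mpr hl1)]
          rw [EReal.coe_le_coe_iff, hcqQ]
          exact QPack.Qm_le hl0 h1b
        · have hcond : (1:ℝ) ≤ 1 - α + σ0 := by rw [heqα]; linarith
          have hFb1 : QPack.Fm (κ x) (bstar x) = 1 :=
            le_antisymm hFble (by rw [heqα] at h1b; linarith)
          have hIicb : (κ x) (Iic (bstar x)) = 1 := by
            rw [← ENNReal.ofReal_toReal (measure_ne_top (κ x) (Iic (bstar x)))]
            rw [show ((κ x) (Iic (bstar x))).toReal = 1 from hFb1]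
            simp
          have hIoib : (κ x) (Ioi (bstar x)) = 0 := by
            have h2 := prob_compl_eq_one_sub (μ := κ x) (measurableSet_Iic (a := (bstar x)))
            rw [compl_Iic, hIicb, tsub_self] at h2
            exact h2
          rw [cqE, if_neg (not_le.mpr (by linarith : (0:ℝ) < 1 - α + σ0)), if_pos hcond]
          refine sSup_le ?_
          rintro ww ⟨z, hz, rfl⟩
          rw [EReal.coe_le_coe_iff]
          by_contra hzb
          push_neg at hzb
          have := hz (Ioi (bstar x)) (Ioi_mem_nhds hzb)
          rw [hIoib] at this
          exact lt_irrefl 0 this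
      have hbnd : cLE κ α σ0 x ≤ ((bstar x - astar x : ℝ) : EReal) := by
        rw [cLE]
        calc cqE κ (1 - α + σ0) x - cqE κ σ0 x ≤ ((bstar x) : EReal) - ((astar x) : EReal) :=
            EReal.sub_le_sub hqb haq
        _ = (((bstar x) - (astar x) : ℝ) : EReal) := (EReal.coe_sub (bstar x) (astar x)).symm
      -- Claim (III): σ0 is a global minimizer of cLE on [0, α]
      have hmin3 : ∀ σ ∈ Icc (0:ℝ) α, cLE κ α σ0 x ≤ cLE κ α σ x := by
        rintro σ ⟨hσl, hσu⟩
        refine le_trans hbnd ?_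
        rcases eq_or_lt_of_le hσl with h0 | h0
        · -- σ = 0
          rw [← h0, cLE, show (1 - α + 0 : ℝ) = 1 - α from by ring]
          rw [show cqE κ (0:ℝ) x = sInf (Real.toEReal '' msupp (κ x)) from by
            rw [cqE, if_pos le_rfl]]
          rw [show cqE κ (1 - α) x = ((cq κ (1 - α) x : ℝ) : EReal) from by
            rw [cqE, if_neg (not_le.mpr (by linarith : (0:ℝ) < 1 - α)),
              if_neg (not_le.mpr (by linarith : 1 - α < 1))]]
          set q1 := cq κ (1 - α) x with hq1def
          have hFq1 : 1 - α ≤ QPack.Fm (κ x) q1 := by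
            rw [hq1def, hcqQ]
            exact QPack.Fm_Qm_ge (by linarith) (by linarith)
          have hz : ∃ z ∈ msupp (κ x), z ≤ q1 - (bstar x - astar x) := by
            by_contra hno
            push_neg at hno
            have hbdd : BddBelow (msupp (κ x)) :=
              ⟨q1 - (bstar x - astar x), fun z hzS => le_of_lt (hno z hzS)⟩
            have hvS : sInf (msupp (κ x)) ∈ msupp (κ x) := hSc.csInf_mem hSne hbdd
            have hvr : q1 - (bstar x - astar x) < sInf (msupp (κ x)) := hno _ hvS
            have hIiov : (κ x) (Iio (sInf (msupp (κ x)))) = 0 := by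
              refine measure_mono_null ?_ hcompl
              intro z hz hzS
              exact absurd (csInf_le hbdd hzS) (not_le.mpr hz)
            have hvq1 : sInf (msupp (κ x)) ≤ q1 := by
              by_contra hq
              push_neg at hq
              have h1 : (κ x) (Iic q1) = 0 :=
                measure_mono_null (fun z hz => lt_of_le_of_lt hz hq) hIiov
              have h2 : QPack.Fm (κ x) q1 = 0 := by rw [QPack.Fm, h1]; simp
              rw [h2] at hFq1
              linarith
            have hsub3 : Iic q1 ⊆ Iio (sInf (msupp (κ x))) ∪ Icc (sInf (msupp (κ x))) q1 := by
              intro z hz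
              rcases lt_or_ge z (sInf (msupp (κ x))) with h | h
              · exact Or.inl h
              · exact Or.inr ⟨h, hz⟩
            have hmq : (κ x) (Iic q1) ≤ (κ x) (Icc (sInf (msupp (κ x))) q1) := by
              calc (κ x) (Iic q1) ≤ (κ x) (Iio (sInf (msupp (κ x))))
                  + (κ x) (Icc (sInf (msupp (κ x))) q1) :=
                le_trans (measure_mono hsub3) (measure_union_le _ _)
              _ = (κ x) (Icc (sInf (msupp (κ x))) q1) := by rw [hIiov, zero_add]
            have htr : 1 - α ≤ ((κ x) (Icc (sInf (msupp (κ x))) q1)).toReal :=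
              le_trans hFq1 (ENNReal.toReal_mono (measure_ne_top _ _) hmq)
            have := hCmin x (sInf (msupp (κ x))) q1 hvq1 htr
            linarith
          obtain ⟨z, hzS, hzle⟩ := hz
          have h1 : sInf (Real.toEReal '' msupp (κ x))
              ≤ ((q1 - (bstar x - astar x) : ℝ) : EReal) :=
            le_trans (sInf_le (mem_image_of_mem _ hzS)) (EReal.coe_le_coe_iff.mpr hzle)
          calc ((bstar x - astar x : ℝ) : EReal)
              = ((q1 : ℝ) : EReal) - ((q1 - (bstar x - astar x) : ℝ) : EReal) := by
                rw [← EReal.coe_sub]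
                norm_cast
                ring
          _ ≤ ((q1 : ℝ) : EReal) - sInf (Real.toEReal '' msupp (κ x)) :=
              EReal.sub_le_sub le_rfl h1
        · rcases eq_or_lt_of_le hσu with hA | hA
          · -- σ = α
            rw [hA, cLE, show (1 - α + α : ℝ) = 1 from by ring]
            rw [show cqE κ (1:ℝ) x = sSup (Real.toEReal '' msupp (κ x)) from by
              rw [cqE, if_neg (not_le.mpr (by norm_num : (0:ℝ) < 1)), if_pos le_rfl]]
            rw [show cqE κ α x = ((cq κ α x : ℝ) : EReal) from by
              rw [cqE, if_neg (not_le.mpr hα0), if_neg (not_le.mpr hα1)]]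
            set q2 := cq κ α x with hq2def
            have hz : ∃ z ∈ msupp (κ x), q2 + (bstar x - astar x) ≤ z := by
              by_contra hno
              push_neg at hno
              have hbdd : BddAbove (msupp (κ x)) :=
                ⟨q2 + (bstar x - astar x), fun z hzS => le_of_lt (hno z hzS)⟩
              have hwS : sSup (msupp (κ x)) ∈ msupp (κ x) := hSc.csSup_mem hSne hbdd
              have hwr : sSup (msupp (κ x)) < q2 + (bstar x - astar x) := hno _ hwS
              have hIoiw : (κ x) (Ioi (sSup (msupp (κ x)))) = 0 := by
                refine measure_mono_null ?_ hcompl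
                intro z hz hzS
                exact absurd (le_csSup hbdd hzS) (not_le.mpr hz)
              have hIioq2 : (κ x) (Iio q2) ≤ ENNReal.ofReal α := by
                rw [hq2def, hcqQ]
                exact QPack.measure_Iio_Qm_le hα0
              have hq2w : q2 ≤ sSup (msupp (κ x)) := by
                by_contra hq
                push_neg at hq
                have h1 : (κ x) (Iic (sSup (msupp (κ x)))) = 1 := by
                  have h2 := prob_compl_eq_one_sub
                    (μ := κ x) (measurableSet_Iic (a := sSup (msupp (κ x))))
                  rw [compl_Iic, hIoiw] at h2
                  have h3 : (1:ℝ≥0∞) ≤ (κ x) (Iic (sSup (msupp (κ x)))) :=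
                    tsub_eq_zero_iff_le.mp h2.symm
                  exact le_antisymm prob_le_one h3
                have h5 : (1 : ℝ≥0∞) ≤ (κ x) (Iio q2) := by
                  rw [← h1]
                  exact measure_mono (fun z hz => lt_of_le_of_lt hz hq)
                have h6 : (1 : ℝ≥0∞) ≤ ENNReal.ofReal α := le_trans h5 hIioq2
                rw [ENNReal.one_le_ofReal] at h6
                linarith
              have hsub4 : (univ : Set ℝ) ⊆ Iio q2
                  ∪ (Icc q2 (sSup (msupp (κ x))) ∪ Ioi (sSup (msupp (κ x)))) := by
                intro z _
                rcases lt_or_ge z q2 with h | h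
                · exact Or.inl h
                rcases le_or_gt z (sSup (msupp (κ x))) with h2 | h2
                · exact Or.inr (Or.inl ⟨h, h2⟩)
                · exact Or.inr (Or.inr h2)
              have hone : (1 : ℝ≥0∞) ≤ ENNReal.ofReal α
                  + (κ x) (Icc q2 (sSup (msupp (κ x)))) := by
                calc (1 : ℝ≥0∞) = (κ x) univ := measure_univ.symm
                _ ≤ (κ x) (Iio q2) + ((κ x) (Icc q2 (sSup (msupp (κ x))))
                    + (κ x) (Ioi (sSup (msupp (κ x))))) := by
                  refine le_trans (measure_mono hsub4) ?_
                  refine le_trans (measure_union_le _ _) ?_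
                  exact add_le_add_right (measure_union_le _ _) _
                _ = (κ x) (Iio q2) + (κ x) (Icc q2 (sSup (msupp (κ x)))) := by
                  rw [hIoiw, add_zero]
                _ ≤ ENNReal.ofReal α + (κ x) (Icc q2 (sSup (msupp (κ x)))) :=
                  add_le_add_left hIioq2 _
              have hof : ENNReal.ofReal (1 - α) ≤ (κ x) (Icc q2 (sSup (msupp (κ x)))) := by
                rw [ENNReal.ofReal_sub _ (le_of_lt hα0), ENNReal.ofReal_one]
                rw [tsub_le_iff_right]
                calc (1 : ℝ≥0∞) ≤ ENNReal.ofReal α + (κ x) (Icc q2 (sSup (msupp (κ x)))) :=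
                    hone
                _ = (κ x) (Icc q2 (sSup (msupp (κ x)))) + ENNReal.ofReal α := by
                  rw [add_comm]
              have htr : 1 - α ≤ ((κ x) (Icc q2 (sSup (msupp (κ x))))).toReal :=
                (ENNReal.ofReal_le_iff_le_toReal (measure_ne_top _ _)).mp hof
              have := hCmin x q2 (sSup (msupp (κ x))) hq2w htr
              linarith
            obtain ⟨z, hzS, hzle⟩ := hz
            have h1 : ((q2 + (bstar x - astar x) : ℝ) : EReal)
                ≤ sSup (Real.toEReal '' msupp (κ x)) :=
              le_trans (EReal.coe_le_coe_iff.mpr hzle) (le_sSup (mem_image_of_mem _ hzS))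
            calc ((bstar x - astar x : ℝ) : EReal)
                = ((q2 + (bstar x - astar x) : ℝ) : EReal) - ((q2 : ℝ) : EReal) := by
                  rw [← EReal.coe_sub]
                  norm_cast
                  ring
            _ ≤ sSup (Real.toEReal '' msupp (κ x)) - ((q2 : ℝ) : EReal) :=
                EReal.sub_le_sub h1 le_rfl
          · -- 0 < σ < α
            have hσ1 : σ < 1 := lt_trans hA hα1
            have h0' : 0 < 1 - α + σ := by linarith
            have h1' : 1 - α + σ < 1 := by linarith
            rw [cLE, show cqE κ (1 - α + σ) x = ((cq κ (1 - α + σ) x : ℝ) : EReal) from by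
                rw [cqE, if_neg (not_le.mpr h0'), if_neg (not_le.mpr h1')],
              show cqE κ σ x = ((cq κ σ x : ℝ) : EReal) from by
                rw [cqE, if_neg (not_le.mpr h0), if_neg (not_le.mpr hσ1)]]
            rw [← EReal.coe_sub, EReal.coe_le_coe_iff]
            exact hbound x σ h0 hA
      have hσIcc : σ0 ∈ Icc ε (α - ε) := hH x σ0 ⟨hσ0nn, hσ0α⟩ hmin3
      have hL0 : cL κ α σ0 x ≤ bstar x - astar x := by
        have h0 : 0 < σ0 := lt_of_lt_of_le hε0 hσIcc.1
        have h1 : σ0 < 1 := lt_of_le_of_lt hσ0α hα1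
        have h0' : 0 < 1 - α + σ0 := by linarith
        have h1' : 1 - α + σ0 < 1 := by
          have := hσIcc.2
          linarith
        rw [cLE, show cqE κ (1 - α + σ0) x = ((cq κ (1 - α + σ0) x : ℝ) : EReal) from by
            rw [cqE, if_neg (not_le.mpr h0'), if_neg (not_le.mpr h1')],
          show cqE κ σ0 x = ((cq κ σ0 x : ℝ) : EReal) from by
            rw [cqE, if_neg (not_le.mpr h0), if_neg (not_le.mpr h1)],
          ← EReal.coe_sub, EReal.coe_le_coe_iff] at hbnd
        exact hbnd
      refine le_trans (csInf_le ?_ ?_) hL0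
      · refine ⟨bstar x - astar x, ?_⟩
        rintro v ⟨τ, ⟨hτ1, hτ2⟩, rfl⟩
        exact hbound x τ (lt_of_lt_of_le hε0 hτ1) (by linarith)
      · exact ⟨σ0, hσIcc, rfl⟩
    have heqf : ∀ x, cLstar κ α ε x = bstar x - astar x := fun x =>
      le_antisymm (hrev x) (hlen x)
    rw [hRε, sub_eq_zero]
    exact integral_congr_ae (ae_of_all _ heqf)



end
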